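/- arXiv:2108.03932 — 5 statements merged into one kernel-verified Lean document; each statement's English description precedes it below -/
import Mathlib

section
/- For every positive integer m and every integer n ≥ 0, the coefficient c(n) of q^n in the power series expansion of ∏_{k≥1} (1-q^k)^m / (1-q^{2k})^m satisfies c(2n) > 0 and c(2n+1) < 0, except for the single case m = 1, n = 1, where c(2) = 0. -/
open PowerSeries

/-- `(q^r; q^a)_∞ = ∏_{k≥0} (1 - q^{r+ak})` as a formal power series (defined
coefficientwise via truncated products; for `r ≥ 1` factors of index `> n` do not
affect the coefficient of `q^n`). -/
noncomputable def qpoch (r a : ℕ) : PowerSeries ℝ :=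
  PowerSeries.mk fun n =>
    PowerSeries.coeff n (∏ k ∈ Finset.range (n + 1), (1 - PowerSeries.X ^ (r + a * k)))

/-- `(q^a; q^a)_∞ = ∏_{k≥1} (1 - q^{ak})`. -/
noncomputable def E (a : ℕ) : PowerSeries ℝ := qpoch a a

/-- `c_t^{(m)}(n)`: the coefficient of `q^n` in `(q;q)_∞^m / (q^t;q^t)_∞^m`. -/
noncomputable def borweinC (t m n : ℕ) : ℝ :=
  PowerSeries.coeff n ((E 1) ^ m * ((E t) ^ m)⁻¹)

/-!
Since `(q;q)_∞ = (q;q²)_∞ (q²;q²)_∞`, the series `(q;q)_∞^m / (q²;q²)_∞^m` is `(q;q²)_∞^m`, so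
`c(n) = (-1)^n a_m(n)`, where `a_m(n)` is the coefficient of `q^n` in `(-q;q²)_∞^m`. The series
`(-q;q²)_∞` counts partitions into distinct odd parts: it has nonnegative coefficients, constant
term `1`, and every `n ≠ 2` has such a partition. Hence `a_m(n) ≥ a_1(n) > 0` for `n ≠ 2`, while
`a_1(2) = 0` and `a_m(2) ≥ a_1(1)² = 1` for `m ≥ 2`.
-/

open Finset

namespace PowerSeries

section Congruence

variable {R : Type*} [CommRing R]

theorem sModEq_X_pow_iff {N : ℕ} {f g : R⟦X⟧} :
    f ≡ g [SMOD Ideal.span {(X : R⟦X⟧) ^ N}] ↔ ∀ i < N, coeff i f = coeff i g := by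
  simp only [SModEq.sub_mem, Ideal.mem_span_singleton, X_pow_dvd_iff, map_sub, sub_eq_zero]

theorem prod_range_one_sub_X_pow_sModEq {e : ℕ → ℕ} {M N : ℕ} (hMN : M ≤ N)
    (he : ∀ k, M ≤ k → M ≤ e k) :
    ∏ k ∈ range N, (1 - X ^ e k : R⟦X⟧) ≡
      ∏ k ∈ range M, (1 - X ^ e k) [SMOD Ideal.span {(X : R⟦X⟧) ^ M}] := by
  have htail : ∏ k ∈ Ico M N, (1 - X ^ e k : R⟦X⟧) ≡ ∏ _k ∈ Ico M N, 1
      [SMOD Ideal.span {(X : R⟦X⟧) ^ M}] := by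
    refine SModEq.prod fun k hk => ?_
    have hX : (X : R⟦X⟧) ^ e k ≡ 0 [SMOD Ideal.span {(X : R⟦X⟧) ^ M}] :=
      SModEq.zero.mpr <| Ideal.mem_span_singleton.mpr <| pow_dvd_pow X (he k (mem_Ico.mp hk).1)
    simpa using SModEq.rfl.sub hX
  rw [← prod_range_mul_prod_Ico _ hMN]
  simpa using SModEq.rfl.mul htail

end Congruence

section Nonnegative

variable {R : Type*} [Semiring R] [PartialOrder R] [IsOrderedRing R] {f g : R⟦X⟧}

theorem coeff_mul_coeff_le_coeff_mul (hf : ∀ i, 0 ≤ coeff i f) (hg : ∀ i, 0 ≤ coeff i g)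
    (a b : ℕ) : coeff a f * coeff b g ≤ coeff (a + b) (f * g) := by
  rw [coeff_mul]
  exact single_le_sum (f := fun p : ℕ × ℕ => coeff p.1 f * coeff p.2 g)
    (fun p _ => mul_nonneg (hf p.1) (hg p.2)) (mem_antidiagonal.mpr rfl : (a, b) ∈ _)

theorem coeff_pow_nonneg (hf : ∀ i, 0 ≤ coeff i f) (m i : ℕ) : 0 ≤ coeff i (f ^ m) := by
  induction m generalizing i with
  | zero =>
    rw [pow_zero, coeff_one]
    split_ifs
    exacts [zero_le_one, le_rfl]
  | succ m ih =>
    rw [pow_succ, coeff_mul]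
    exact sum_nonneg fun p _ => mul_nonneg (ih p.1) (hf p.2)

theorem coeff_pow_mono (hf : ∀ i, 0 ≤ coeff i f) (h0 : constantCoeff f = 1) (n : ℕ) :
    Monotone fun m => coeff n (f ^ m) := by
  refine monotone_nat_of_le_succ fun m => ?_
  have := coeff_mul_coeff_le_coeff_mul (coeff_pow_nonneg hf m) hf n 0
  rwa [coeff_zero_eq_constantCoeff_apply, h0, mul_one, add_zero, ← pow_succ] at this

end Nonnegative

theorem coeff_prod_one_add_X_pow {R ι : Type*} [CommSemiring R] (s : Finset ι) (e : ι → ℕ)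
    (n : ℕ) :
    coeff n (∏ i ∈ s, (1 + X ^ e i : R⟦X⟧)) = #{t ∈ s.powerset | ∑ i ∈ t, e i = n} := by
  classical
  simp only [prod_one_add, map_sum, prod_pow_eq_pow_sum, coeff_X_pow, sum_boole, eq_comm]

end PowerSeries

theorem Finset.prod_range_two_mul {M : Type*} [CommMonoid M] (N : ℕ) (f : ℕ → M) :
    ∏ j ∈ range (2 * N), f j = ∏ k ∈ range N, (f (2 * k) * f (2 * k + 1)) := by
  induction N with
  | zero => simp
  | succ N ih =>
    rw [prod_range_succ, ← ih, show 2 * (N + 1) = 2 * N + 1 + 1 by ring, prod_range_succ,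
      prod_range_succ, mul_assoc]

theorem qpoch_sModEq_prod_range {r a : ℕ} (hr : 0 < r) (ha : 0 < a) {N N' : ℕ} (hN : N ≤ N') :
    qpoch r a ≡ ∏ k ∈ range N', (1 - X ^ (r + a * k)) [SMOD Ideal.span {(X : ℝ⟦X⟧) ^ N}] := by
  have he : ∀ M k, M ≤ k → M ≤ r + a * k := fun M k hk => by nlinarith
  refine sModEq_X_pow_iff.mpr fun i hi => ?_
  rw [qpoch, coeff_mk]
  exact sModEq_X_pow_iff.mp
    (prod_range_one_sub_X_pow_sModEq (by omega) (he (i + 1))).symm i (lt_add_one i)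

theorem E_one_eq_qpoch_mul_E_two : E 1 = qpoch 1 2 * E 2 := by
  ext n
  have hodd := qpoch_sModEq_prod_range one_pos two_pos (le_refl (n + 1))
  have heven := qpoch_sModEq_prod_range two_pos two_pos (le_refl (n + 1))
  have hall := qpoch_sModEq_prod_range one_pos one_pos (N := n + 1) (N' := 2 * (n + 1)) (by omega)
  have hsplit : ∏ j ∈ range (2 * (n + 1)), (1 - X ^ (1 + 1 * j) : ℝ⟦X⟧) =
      (∏ k ∈ range (n + 1), (1 - X ^ (1 + 2 * k))) *
        ∏ k ∈ range (n + 1), (1 - X ^ (2 + 2 * k)) := by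
    rw [prod_range_two_mul, ← prod_mul_distrib]
    refine prod_congr rfl fun k _ => ?_
    congr 3 <;> ring
  rw [hsplit] at hall
  exact sModEq_X_pow_iff.mp (hall.trans (hodd.mul heven).symm) n (lt_add_one n)

theorem borweinC_two_eq_coeff_qpoch_pow (m n : ℕ) :
    borweinC 2 m n = coeff n (qpoch 1 2 ^ m) := by
  have h0 : constantCoeff (E 2) = 1 := by
    rw [← coeff_zero_eq_constantCoeff_apply, E,
      sModEq_X_pow_iff.mp (qpoch_sModEq_prod_range two_pos two_pos (le_refl 1)) 0 one_pos]
    simp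
  rw [borweinC, E_one_eq_qpoch_mul_E_two, mul_pow, mul_assoc, PowerSeries.mul_inv_cancel, mul_one]
  simp [h0]

noncomputable def distinctOddPartsGF : ℝ⟦X⟧ := rescale (-1) (qpoch 1 2)

theorem borweinC_two_eq (m n : ℕ) :
    borweinC 2 m n = (-1) ^ n * coeff n (distinctOddPartsGF ^ m) := by
  rw [borweinC_two_eq_coeff_qpoch_pow, distinctOddPartsGF, ← map_pow, coeff_rescale, ← mul_assoc,
    ← pow_add, ← two_mul, pow_mul, neg_one_sq, one_pow, one_mul]

theorem coeff_distinctOddPartsGF (n : ℕ) :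
    coeff n distinctOddPartsGF = #{t ∈ (range (n + 1)).powerset | ∑ i ∈ t, (1 + 2 * i) = n} := by
  have hrescale : ∏ k ∈ range (n + 1), (1 + X ^ (1 + 2 * k) : ℝ⟦X⟧) =
      rescale (-1) (∏ k ∈ range (n + 1), (1 - X ^ (1 + 2 * k))) := by
    rw [map_prod]
    refine prod_congr rfl fun k _ => ?_
    rw [map_sub, map_one, map_pow, rescale_neg_one_X, Odd.neg_pow ⟨k, by ring⟩, sub_neg_eq_add]
  rw [← coeff_prod_one_add_X_pow, hrescale, distinctOddPartsGF, coeff_rescale, coeff_rescale,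
    sModEq_X_pow_iff.mp (qpoch_sModEq_prod_range one_pos two_pos le_rfl) n (lt_add_one n)]

theorem exists_subset_range_sum_odd_eq {n : ℕ} (hn : n ≠ 2) :
    ∃ t ⊆ range (n + 1), ∑ i ∈ t, (1 + 2 * i) = n := by
  obtain ⟨c, rfl | rfl⟩ := Nat.even_or_odd' n
  · rcases Nat.lt_or_ge c 2 with hc | hc
    · exact ⟨∅, empty_subset _, by rw [sum_empty]; omega⟩
    · refine ⟨{0, c - 1}, ?_, ?_⟩
      · intro x hx
        simp only [mem_insert, mem_singleton] at hx
        rcases hx with rfl | rfl <;> simp only [mem_range] <;> omega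
      · rw [sum_pair (by omega)]
        omega
  · exact ⟨{c}, singleton_subset_iff.mpr (mem_range.mpr (by omega)), by rw [sum_singleton]; ring⟩

theorem coeff_distinctOddPartsGF_nonneg (n : ℕ) : 0 ≤ coeff n distinctOddPartsGF := by
  rw [coeff_distinctOddPartsGF]
  positivity

theorem coeff_distinctOddPartsGF_pos {n : ℕ} (hn : n ≠ 2) : 0 < coeff n distinctOddPartsGF := by
  obtain ⟨t, ht, hsum⟩ := exists_subset_range_sum_odd_eq hn
  rw [coeff_distinctOddPartsGF, Nat.cast_pos, card_pos]
  exact ⟨t, mem_filter.mpr ⟨mem_powerset.mpr ht, hsum⟩⟩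

theorem coeff_distinctOddPartsGF_two : coeff 2 distinctOddPartsGF = 0 := by
  rw [coeff_distinctOddPartsGF, Nat.cast_eq_zero]
  decide

theorem constantCoeff_distinctOddPartsGF : constantCoeff distinctOddPartsGF = 1 := by
  rw [← coeff_zero_eq_constantCoeff_apply, coeff_distinctOddPartsGF, Nat.cast_eq_one]
  decide

theorem coeff_distinctOddPartsGF_pow_pos {m n : ℕ} (hm : 0 < m) (hmn : ¬(m = 1 ∧ n = 2)) :
    0 < coeff n (distinctOddPartsGF ^ m) := by
  have hf := coeff_distinctOddPartsGF_nonneg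
  have hmono := coeff_pow_mono hf constantCoeff_distinctOddPartsGF
  rcases eq_or_ne n 2 with rfl | hn
  · have h1 := coeff_distinctOddPartsGF_pos (n := 1) (by decide)
    calc 0 < coeff 1 distinctOddPartsGF * coeff 1 distinctOddPartsGF := mul_pos h1 h1
      _ ≤ coeff 2 (distinctOddPartsGF ^ 2) := by
        simpa [sq] using coeff_mul_coeff_le_coeff_mul hf hf 1 1
      _ ≤ coeff 2 (distinctOddPartsGF ^ m) := hmono 2 (by omega)
  · exact (coeff_distinctOddPartsGF_pos hn).trans_le (by simpa using hmono n hm)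

theorem stmt0 (m : ℕ) (hm : 0 < m) (n : ℕ) :
    ((m = 1 ∧ n = 1) → borweinC 2 m (2 * n) = 0) ∧
    (¬(m = 1 ∧ n = 1) → 0 < borweinC 2 m (2 * n)) ∧
    borweinC 2 m (2 * n + 1) < 0 := by
  have heven : borweinC 2 m (2 * n) = coeff (2 * n) (distinctOddPartsGF ^ m) := by
    rw [borweinC_two_eq, (even_two_mul n).neg_one_pow, one_mul]
  have hodd : borweinC 2 m (2 * n + 1) = -coeff (2 * n + 1) (distinctOddPartsGF ^ m) := by
    rw [borweinC_two_eq, (odd_two_mul_add_one n).neg_one_pow, neg_one_mul]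
  rw [heven, hodd, neg_neg_iff_pos]
  refine ⟨?_, fun hne => coeff_distinctOddPartsGF_pow_pos hm (by omega),
    coeff_distinctOddPartsGF_pow_pos hm (by omega)⟩
  rintro ⟨rfl, rfl⟩
  simpa using coeff_distinctOddPartsGF_two
end

section
/- Let t be a positive integer and let 0 ≤ r < t be an integer such that r is not congruent to j(3j+1)/2 modulo t for any integer j with 0 ≤ j < 2t. Then for all n ≥ 0, the coefficient of q^{tn+r} in (q;q)_∞/(q^t;q^t)_∞ is zero. -/
open PowerSeries

/-
Euler's pentagonal number theorem says that `(q;q)_∞` is supported on the generalized pentagonal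
numbers, while `1/(q^t;q^t)_∞` is a power series in `q^t`. So the coefficient of `q^(tn+r)` in the
quotient only involves pentagonal exponents `≡ r (mod t)`, and there are none, because
`k(3k-1)/2 mod t` only depends on `k mod 2t`.
-/

namespace PowerSeries

variable {R : Type*} [CommRing R]

theorem coeff_mul_prod_one_sub_X_pow {ι : Type*} (P : R⟦X⟧) (s : Finset ι) (e : ι → ℕ)
    {n : ℕ} (h : ∀ i ∈ s, n < e i) :
    coeff n (P * ∏ i ∈ s, (1 - X ^ e i)) = coeff n P := by
  classical
  induction s using Finset.induction_on with
  | empty => simp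
  | insert i s hi ih =>
    rw [Finset.prod_insert hi, mul_left_comm, sub_mul, one_mul, map_sub, coeff_X_pow_mul',
      if_neg (not_le.2 (h i (Finset.mem_insert_self i s))), sub_zero,
      ih fun j hj => h j (Finset.mem_insert_of_mem hj)]

theorem coeff_prod_one_sub_X_pow_of_subset {ι : Type*} [DecidableEq ι] {s u : Finset ι}
    (e : ι → ℕ) {n : ℕ} (hsu : s ⊆ u) (h : ∀ i ∈ u \ s, n < e i) :
    coeff n (∏ i ∈ u, (1 - X ^ e i) : R⟦X⟧) = coeff n (∏ i ∈ s, (1 - X ^ e i)) := by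
  rw [← Finset.prod_sdiff hsu, mul_comm, coeff_mul_prod_one_sub_X_pow _ _ _ h]

theorem expand_inv {k : Type*} [Field k] (p : ℕ) (hp : p ≠ 0) (φ : k⟦X⟧) :
    expand p hp φ⁻¹ = (expand p hp φ)⁻¹ := by
  by_cases hφ : constantCoeff φ = 0
  · rw [inv_eq_zero.2 hφ, inv_eq_zero.2 (by rwa [constantCoeff_expand]), map_zero]
  · rw [eq_inv_iff_mul_eq_one (by rwa [constantCoeff_expand]), ← map_mul,
      PowerSeries.inv_mul_cancel φ hφ, map_one]

theorem coeff_mul_expand_eq_zero (p : ℕ) (hp : p ≠ 0) {f : R⟦X⟧} (g : R⟦X⟧) {m : ℕ}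
    (hf : ∀ a, a ≡ m [MOD p] → coeff a f = 0) : coeff m (f * expand p hp g) = 0 := by
  rw [coeff_mul]
  refine Finset.sum_eq_zero fun ⟨a, b⟩ hab => ?_
  rw [Finset.HasAntidiagonal.mem_antidiagonal] at hab
  rw [coeff_expand]
  split_ifs with hb
  · have hm : a ≡ m [MOD p] := by
      simpa [← hab] using ((Nat.modEq_zero_iff_dvd.2 hb).add_left a).symm
    rw [hf a hm, zero_mul]
  · rw [mul_zero]

end PowerSeries

open Pentagonal

theorem coeff_qpoch_eq_coeff_prod {r a : ℕ} (ha : 0 < a) {n : ℕ} {u : Finset ℕ}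
    (hu : Finset.range (n + 1) ⊆ u) :
    coeff n (qpoch r a) = coeff n (∏ k ∈ u, (1 - X ^ (r + a * k))) := by
  rw [qpoch, coeff_mk, coeff_prod_one_sub_X_pow_of_subset _ hu]
  intro k hk
  have : n < k := by simpa using (Finset.mem_sdiff.1 hk).2
  nlinarith

theorem E_one_eq_pentagonalSeries : E 1 = pentagonalSeries ℝ := by
  ext n
  obtain ⟨u, hu, hpent⟩ := ((Filter.eventually_ge_atTop (Finset.range (n + 1))).and
    (coeff_prod_one_sub_X_pow_eventually_eq ℝ n)).exists
  rw [E, coeff_qpoch_eq_coeff_prod one_pos hu, ← hpent]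
  simp only [one_mul, add_comm 1]

theorem E_eq_expand {t : ℕ} (ht : t ≠ 0) : E t = expand t ht (E 1) := by
  ext n
  rw [E, coeff_qpoch_eq_coeff_prod (Nat.pos_of_ne_zero ht) subset_rfl]
  have hprod : (∏ k ∈ Finset.range (n + 1), (1 - X ^ (t + t * k)) : ℝ⟦X⟧)
      = expand t ht (∏ k ∈ Finset.range (n + 1), (1 - X ^ (1 + 1 * k))) := by
    simp [map_prod, ← pow_mul, mul_add]
  rw [hprod, coeff_expand, coeff_expand, E, coeff_qpoch_eq_coeff_prod one_pos
    (Finset.range_subset_range.2 (Nat.succ_le_succ (Nat.div_le_self n t)))]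

theorem pentagonal_neg_natCast (j : ℕ) : pentagonal (-j) = j * (3 * j + 1) / 2 := by
  rw [pentagonal_neg]
  exact_mod_cast Int.toNat_natCast _

theorem exists_lt_two_mul_pentagonal_modEq {t : ℕ} (ht : 0 < t) (k : ℤ) :
    ∃ j < 2 * t, pentagonal k ≡ pentagonal (-j) [MOD t] := by
  have h2t : (0 : ℤ) < 2 * t := by omega
  obtain ⟨j, hj⟩ : ∃ j : ℕ, (j : ℤ) = -k % (2 * t) :=
    ⟨_, Int.toNat_of_nonneg (Int.emod_nonneg _ h2t.ne')⟩
  refine ⟨j, by have := Int.emod_lt_of_pos (-k) h2t; omega, ?_⟩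
  rw [Nat.modEq_iff_dvd]
  -- `2 (pentagonal (-j) - pentagonal k) = (j + k) (3 (j - k) + 1)`, and `2t ∣ j + k`.
  refine ⟨-(-k / (2 * t)) * (3 * (j - k) + 1), mul_left_cancel₀ two_ne_zero ?_⟩
  linear_combination two_mul_natCast_pentagonal_neg (j : ℤ) - two_mul_natCast_pentagonal k
    + (3 * (j - k) + 1) * (hj.trans (Int.emod_def _ _))

theorem stmt3_general (t : ℕ) (ht : 0 < t) (r : ℕ)
    (h : ∀ j : ℕ, j < 2 * t → ¬ (r ≡ j * (3 * j + 1) / 2 [MOD t])) (n : ℕ) :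
    borweinC t 1 (t * n + r) = 0 := by
  rw [borweinC, pow_one, pow_one, E_eq_expand ht.ne', ← expand_inv]
  refine coeff_mul_expand_eq_zero t ht.ne' _ fun a ha => ?_
  rw [E_one_eq_pentagonalSeries]
  refine coeff_pentagonalSeries_eq_zero ℝ ?_
  rintro ⟨k, rfl⟩
  obtain ⟨j, hj, hk⟩ := exists_lt_two_mul_pentagonal_modEq ht k
  refine h j hj ?_
  rw [← pentagonal_neg_natCast]
  exact ((Nat.mul_add_mod_self_left t n r).symm.trans ha.symm).trans hk

theorem stmt3 (t : ℕ) (ht : 0 < t) (r : ℕ) (hr : r < t)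
    (h : ∀ j : ℕ, j < 2 * t → ¬ (r ≡ j * (3 * j + 1) / 2 [MOD t])) (n : ℕ) :
    borweinC t 1 (t * n + r) = 0 :=
  stmt3_general t ht r h n
end

section
/- For all real x > 0, the modified Bessel function satisfies I_{-1}(x) < √(π/8) · e^x / √x. -/
/-!
Jordan's inequality `cos θ ≤ 1 - 2θ²/π²` on `[-π, π]`, together with `cos θ ≤ 1`,
dominates the integrand `e^{x cos θ} cos θ` by the Gaussian `e^x e^{-2xθ²/π²}`.
Its integral over `[0, π]` is strictly below the half-line Gaussian integral
`e^x · π √(π/(2x)) / 2`, and dividing by `π` gives the bound.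
-/

open Real

/-- The modified Bessel function of the first kind of order `1` (equal to `I_{-1}`),
`I₁(x) = (1/π) ∫_0^π e^{x cos θ} cos θ dθ`. -/
noncomputable def besselI1 (x : ℝ) : ℝ :=
  (1 / Real.pi) * ∫ θ in (0:ℝ)..Real.pi, Real.exp (x * Real.cos θ) * Real.cos θ

open MeasureTheory Set

theorem intervalIntegral_exp_neg_mul_sq_lt {b : ℝ} (hb : 0 < b) (a : ℝ) :
    ∫ θ in (0:ℝ)..a, exp (-b * θ ^ 2) < √(π / b) / 2 := by
  have hint : Integrable fun θ : ℝ => exp (-b * θ ^ 2) := integrable_exp_neg_mul_sq hb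
  have : NeZero (volume.restrict (Ioi a)) := ⟨by simp [Measure.restrict_eq_zero]⟩
  have htail : 0 < ∫ θ in Ioi a, exp (-b * θ ^ 2) := integral_exp_pos hint.integrableOn
  rw [← intervalIntegral.integral_Ioi_sub_Ioi' hint.integrableOn hint.integrableOn,
    integral_gaussian_Ioi]
  linarith

theorem exp_mul_cos_mul_cos_le {x θ : ℝ} (hx : 0 ≤ x) (hθ : |θ| ≤ π) :
    exp (x * cos θ) * cos θ ≤ exp x * exp (-(2 * x / π ^ 2) * θ ^ 2) := calc
  exp (x * cos θ) * cos θ ≤ exp (x * cos θ) :=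
    mul_le_of_le_one_right (exp_pos _).le (cos_le_one θ)
  _ ≤ exp (x * (1 - 2 / π ^ 2 * θ ^ 2)) := by
    gcongr; exact cos_le_one_sub_mul_cos_sq hθ
  _ = exp x * exp (-(2 * x / π ^ 2) * θ ^ 2) := by rw [← exp_add]; ring_nf

theorem besselI1_le_integral {x : ℝ} (hx : 0 ≤ x) :
    besselI1 x ≤ exp x / π * ∫ θ in (0:ℝ)..π, exp (-(2 * x / π ^ 2) * θ ^ 2) := by
  have hmono : ∫ θ in (0:ℝ)..π, exp (x * cos θ) * cos θ ≤
      ∫ θ in (0:ℝ)..π, exp x * exp (-(2 * x / π ^ 2) * θ ^ 2) := by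
    refine intervalIntegral.integral_mono_on pi_pos.le
      (Continuous.intervalIntegrable (by fun_prop) _ _)
      (Continuous.intervalIntegrable (by fun_prop) _ _) fun θ hθ => ?_
    exact exp_mul_cos_mul_cos_le hx (abs_le.2 ⟨by linarith [hθ.1, pi_pos], hθ.2⟩)
  calc besselI1 x ≤ 1 / π * ∫ θ in (0:ℝ)..π, exp x * exp (-(2 * x / π ^ 2) * θ ^ 2) :=
        mul_le_mul_of_nonneg_left hmono (by positivity)
    _ = _ := by rw [intervalIntegral.integral_const_mul]; ring

theorem stmt15 (x : ℝ) (hx : 0 < x) :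
    besselI1 x < Real.sqrt (Real.pi / 8) * Real.exp x / Real.sqrt x := by
  have hb : 0 < 2 * x / π ^ 2 := by positivity
  calc besselI1 x ≤ exp x / π * ∫ θ in (0:ℝ)..π, exp (-(2 * x / π ^ 2) * θ ^ 2) :=
        besselI1_le_integral hx.le
    _ < exp x / π * (√(π / (2 * x / π ^ 2)) / 2) := by
        gcongr; exact intervalIntegral_exp_neg_mul_sq_lt hb π
    _ = √(π / 8) * exp x / √x := by
        rw [show π / (2 * x / π ^ 2) = π ^ 2 * (π / 8) / x * 4 by field_simp; ring,
          sqrt_mul' _ zero_le_four, sqrt_div' _ hx.le, sqrt_mul' _ (by positivity),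
          sqrt_sq pi_pos.le, show (4:ℝ) = 2 ^ 2 by norm_num, sqrt_sq zero_le_two]
        field_simp
end

section
/- For all real x ≥ 3, the modified Bessel function satisfies I_{-1}(x) > (1/10) · e^x / √x. -/
open Real

set_option maxHeartbeats 2000000 in
theorem stmt16 (x : ℝ) (hx : 3 ≤ x) :
    (1 / 10) * Real.exp x / Real.sqrt x < besselI1 x := by
  have hx0 : (0:ℝ) < x := by linarith
  set s := Real.sqrt x with hs
  have hs0 : 0 < s := Real.sqrt_pos.mpr hx0
  have hsx : s * s = x := Real.mul_self_sqrt hx0.le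
  have hs17 : (1.7:ℝ) ≤ s := by
    have : Real.sqrt 3 ≤ s := Real.sqrt_le_sqrt hx
    have h17 : (1.7:ℝ) ≤ Real.sqrt 3 := by
      rw [show (3:ℝ) = 1.7^2 + 0.11 by norm_num]
      nlinarith [Real.sq_sqrt (show (0:ℝ) ≤ 1.7^2 + 0.11 by norm_num),
        Real.sqrt_nonneg (1.7^2 + 0.11:ℝ)]
    linarith
  have hsx' : s ≤ x := by nlinarith
  set δ := 1 / s with hδdef
  have hδ0 : 0 < δ := by positivity
  have hδ6 : δ ≤ 0.6 := by
    rw [hδdef, div_le_iff₀ hs0]; nlinarith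
  have hπ : (3.14:ℝ) < Real.pi := by linarith [Real.pi_gt_d6]
  have hπ' : Real.pi < 3.15 := Real.pi_lt_d2
  have hδπ : δ ≤ Real.pi / 2 := by linarith
  -- integrability
  have hcont : Continuous fun θ : ℝ => Real.exp (x * Real.cos θ) * Real.cos θ := by
    continuity
  have hint : ∀ a b : ℝ, IntervalIntegrable
      (fun θ : ℝ => Real.exp (x * Real.cos θ) * Real.cos θ) MeasureTheory.volume a b :=
    fun a b => hcont.intervalIntegrable a b
  -- split the integral
  have hsplit : (∫ θ in (0:ℝ)..Real.pi, Real.exp (x * Real.cos θ) * Real.cos θ)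
      = (∫ θ in (0:ℝ)..δ, Real.exp (x * Real.cos θ) * Real.cos θ)
      + (∫ θ in δ..(Real.pi/2), Real.exp (x * Real.cos θ) * Real.cos θ)
      + (∫ θ in (Real.pi/2)..Real.pi, Real.exp (x * Real.cos θ) * Real.cos θ) := by
    rw [intervalIntegral.integral_add_adjacent_intervals (hint 0 δ) (hint δ (Real.pi/2)),
      intervalIntegral.integral_add_adjacent_intervals (hint 0 (Real.pi/2))
        (hint (Real.pi/2) Real.pi)]
  -- bound on [0, δ]
  have hcosδ : (5:ℝ)/6 ≤ Real.cos δ ∧ x - 1/2 ≤ x * Real.cos δ := by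
    have h1 : 1 - δ^2/2 ≤ Real.cos δ := Real.one_sub_sq_div_two_le_cos
    have hδ2 : δ^2 = 1/x := by
      rw [hδdef]; field_simp; nlinarith
    constructor
    · rw [hδ2] at h1
      have : 1/x ≤ 1/3 := by
        rw [div_le_div_iff₀ hx0 (by norm_num)]; linarith
      linarith
    · rw [hδ2] at h1
      have h2 : x * (1 - 1/x/2) ≤ x * Real.cos δ := mul_le_mul_of_nonneg_left h1 hx0.le
      have h3 : x * (1 - 1/x/2) = x - 1/2 := by field_simp
      linarith
  have hC : ∀ θ ∈ Set.Icc (0:ℝ) δ,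
      (5/6) * Real.exp (x - 1/2) ≤ Real.exp (x * Real.cos θ) * Real.cos θ := by
    intro θ ⟨h0, h1⟩
    have hcos : Real.cos δ ≤ Real.cos θ :=
      Real.cos_le_cos_of_nonneg_of_le_pi h0 (by linarith) h1
    have he : Real.exp (x - 1/2) ≤ Real.exp (x * Real.cos θ) := by
      apply Real.exp_le_exp.mpr
      nlinarith [hcosδ.2]
    nlinarith [hcosδ.1, Real.exp_pos (x - 1/2), Real.exp_pos (x * Real.cos θ)]
  have hI1 : δ * ((5/6) * Real.exp (x - 1/2))
      ≤ ∫ θ in (0:ℝ)..δ, Real.exp (x * Real.cos θ) * Real.cos θ := by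
    have := intervalIntegral.integral_mono_on hδ0.le
      (intervalIntegrable_const (c := (5/6) * Real.exp (x - 1/2))) (hint 0 δ) hC
    rwa [intervalIntegral.integral_const, smul_eq_mul, sub_zero] at this
  -- bound on [δ, π/2]
  have hI2 : (0:ℝ) ≤ ∫ θ in δ..(Real.pi/2), Real.exp (x * Real.cos θ) * Real.cos θ := by
    apply intervalIntegral.integral_nonneg hδπ
    intro θ ⟨h0, h1⟩
    have : 0 ≤ Real.cos θ := Real.cos_nonneg_of_mem_Icc ⟨by linarith, h1⟩
    positivity
  -- bound on [π/2, π]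
  have hI3 : (-1:ℝ) ≤ ∫ θ in (Real.pi/2)..Real.pi, Real.exp (x * Real.cos θ) * Real.cos θ := by
    have hmono : ∀ θ ∈ Set.Icc (Real.pi/2) Real.pi,
        Real.cos θ ≤ Real.exp (x * Real.cos θ) * Real.cos θ := by
      intro θ ⟨h0, h1⟩
      have hc : Real.cos θ ≤ 0 := Real.cos_nonpos_of_pi_div_two_le_of_le h0 (by linarith)
      have he : Real.exp (x * Real.cos θ) ≤ 1 := by
        rw [Real.exp_le_one_iff]
        exact mul_nonpos_of_nonneg_of_nonpos hx0.le hc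
      nlinarith
    have := intervalIntegral.integral_mono_on (by linarith : Real.pi/2 ≤ Real.pi)
      (Real.continuous_cos.intervalIntegrable _ _) (hint (Real.pi/2) Real.pi) hmono
    rwa [integral_cos, Real.sin_pi, Real.sin_pi_div_two, zero_sub] at this
  -- numeric facts
  have he1 : (2.718:ℝ) < Real.exp 1 := by linarith [Real.exp_one_gt_d9]
  have he1' : Real.exp 1 < 2.719 := by linarith [Real.exp_one_lt_d9]
  have hehalf : Real.exp (-(1/2)) > 0.606 := by
    have hsq : Real.exp (1/2) * Real.exp (1/2) = Real.exp 1 := by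
      rw [← Real.exp_add]; norm_num
    have hp : Real.exp (1/2) < 1.65 := by nlinarith [Real.exp_pos (1/2:ℝ)]
    have : Real.exp (-(1/2)) * Real.exp (1/2) = 1 := by
      rw [← Real.exp_add]; norm_num [Real.exp_zero]
    nlinarith [Real.exp_pos (-(1/2):ℝ), Real.exp_pos (1/2:ℝ)]
  have he3 : (20:ℝ) < Real.exp 3 := by
    have : Real.exp 3 = Real.exp 1 * Real.exp 1 * Real.exp 1 := by
      rw [← Real.exp_add, ← Real.exp_add]; norm_num
    nlinarith
  have hexp_lb : Real.exp 3 * (x - 2) ≤ Real.exp x := by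
    have h1 : x - 2 ≤ Real.exp (x - 3) := by
      linarith [Real.add_one_le_exp (x - 3)]
    have h2 : Real.exp 3 * Real.exp (x - 3) = Real.exp x := by
      rw [← Real.exp_add]; ring_nf
    nlinarith [Real.exp_pos (3:ℝ)]
  -- put it together
  have hexpxm : Real.exp (x - 1/2) = Real.exp x * Real.exp (-(1/2)) := by
    rw [← Real.exp_add]; ring_nf
  have hItot : (5/6) * Real.exp (x - 1/2) / s - 1
      ≤ ∫ θ in (0:ℝ)..Real.pi, Real.exp (x * Real.cos θ) * Real.cos θ := by
    rw [hsplit]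
    have : δ * ((5/6) * Real.exp (x - 1/2)) = (5/6) * Real.exp (x - 1/2) / s := by
      rw [hδdef]; ring
    linarith [hI1, hI2, hI3, this ▸ hI1]
  have hπ0 : (0:ℝ) < Real.pi := Real.pi_pos
  set I := ∫ θ in (0:ℝ)..Real.pi, Real.exp (x * Real.cos θ) * Real.cos θ with hI
  have hmain : (1/10) * Real.exp x * Real.pi < ((5/6) * Real.exp (x - 1/2) / s - 1) * s := by
    have hs'' : ((5/6) * Real.exp (x - 1/2) / s - 1) * s = (5/6) * Real.exp (x - 1/2) - s := by
      field_simp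
    rw [hs'', hexpxm]
    have hc : x < 0.19 * Real.exp x := by nlinarith [Real.exp_pos x]
    nlinarith [Real.exp_pos x]
  have h2 : (1/10) * Real.exp x * Real.pi < I * s :=
    lt_of_lt_of_le hmain (mul_le_mul_of_nonneg_right hItot hs0.le)
  rw [besselI1, ← hI]
  rw [div_lt_iff₀ hs0]
  calc (1/10) * Real.exp x = (1/10) * Real.exp x * Real.pi / Real.pi := by field_simp
    _ < I * s / Real.pi := by gcongr
    _ = 1 / Real.pi * I * s := by ring
end

section
/- Let f_1, …, f_m (m ≥ 2) be formal power series f_i(q) = ∑_{n≥0} a_i(n) q^n with real coefficients such that (−1)^n a_i(n) > 0 for all n ≥ 0 except that a_i(2) is allowed to be 0. Then the product f = f_1 ⋯ f_m = ∑_{n≥0} a(n) q^n satisfies (−1)^n a(n) > 0 for all n ≥ 0. -/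
/-! Substituting `q ↦ -q` (the ring map `PowerSeries.rescale (-1)`) turns the sign condition into
positivity of coefficients, and it commutes with products. For series with nonnegative
coefficients, `coeff n (f * g) ≥ coeff i f * coeff j g` whenever `i + j = n`. Two factors that are
positive away from `q ^ 2` give a product positive everywhere (`2 = 1 + 1`), and multiplying by the
remaining factors, whose constant terms are positive, keeps it so (`n = n + 0`). -/

namespace PowerSeries

section OrderedSemiring

variable {R : Type*} [Semiring R] [PartialOrder R]

theorem coeff_mul_nonneg [IsOrderedRing R] {f g : R⟦X⟧} (hf : ∀ n, 0 ≤ coeff n f)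
    (hg : ∀ n, 0 ≤ coeff n g) (n : ℕ) : 0 ≤ coeff n (f * g) := by
  rw [coeff_mul]
  exact Finset.sum_nonneg fun p _ => mul_nonneg (hf p.1) (hg p.2)

theorem coeff_add_mul_pos [IsStrictOrderedRing R] {f g : R⟦X⟧} (hf : ∀ n, 0 ≤ coeff n f)
    (hg : ∀ n, 0 ≤ coeff n g) {i j n : ℕ} (hij : i + j = n) (hi : 0 < coeff i f)
    (hj : 0 < coeff j g) : 0 < coeff n (f * g) := by
  rw [coeff_mul]
  exact Finset.sum_pos' (fun p _ => mul_nonneg (hf p.1) (hg p.2))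
    ⟨(i, j), Finset.HasAntidiagonal.mem_antidiagonal.mpr hij, mul_pos hi hj⟩

theorem coeff_mul_pos_of_coeff_pos_of_ne_two [IsStrictOrderedRing R] {f g : R⟦X⟧}
    (hf : ∀ n, 0 ≤ coeff n f) (hg : ∀ n, 0 ≤ coeff n g)
    (hf' : ∀ n, n ≠ 2 → 0 < coeff n f) (hg' : ∀ n, n ≠ 2 → 0 < coeff n g) (n : ℕ) :
    0 < coeff n (f * g) := by
  rcases eq_or_ne n 2 with rfl | hn
  · exact coeff_add_mul_pos hf hg rfl (hf' 1 (by norm_num)) (hg' 1 (by norm_num))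
  · exact coeff_add_mul_pos hf hg (add_zero n) (hf' n hn) (hg' 0 two_ne_zero.symm)

theorem coeff_mul_pos_of_constantCoeff_pos [IsStrictOrderedRing R] {f g : R⟦X⟧}
    (hf : ∀ n, 0 < coeff n f) (hg : ∀ n, 0 ≤ coeff n g) (hg₀ : 0 < constantCoeff g) (n : ℕ) :
    0 < coeff n (f * g) :=
  coeff_add_mul_pos (fun k => (hf k).le) hg (add_zero n) (hf n) (by rwa [coeff_zero_eq_constantCoeff_apply])

end OrderedSemiring

section OrderedCommSemiring

variable {R ι : Type*} [CommSemiring R] [PartialOrder R]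

theorem coeff_prod_nonneg [IsOrderedRing R] (s : Finset ι) {f : ι → R⟦X⟧}
    (hf : ∀ i ∈ s, ∀ n, 0 ≤ coeff n (f i)) (n : ℕ) : 0 ≤ coeff n (∏ i ∈ s, f i) :=
  Finset.prod_induction f (fun g => ∀ n, 0 ≤ coeff n g) (fun _ _ => coeff_mul_nonneg)
    (fun n => by rw [coeff_one]; split_ifs <;> simp) hf n

theorem constantCoeff_prod_pos [IsStrictOrderedRing R] (s : Finset ι) {f : ι → R⟦X⟧}
    (hf : ∀ i ∈ s, 0 < constantCoeff (f i)) : 0 < constantCoeff (∏ i ∈ s, f i) := by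
  rw [map_prod]
  exact Finset.prod_pos hf

end OrderedCommSemiring

end PowerSeries

open PowerSeries

theorem stmt17 (m : ℕ) (hm : 2 ≤ m) (f : Fin m → PowerSeries ℝ)
    (h : ∀ i, ∀ n : ℕ, n ≠ 2 → 0 < (-1 : ℝ) ^ n * PowerSeries.coeff (R := ℝ) n (f i))
    (h2 : ∀ i, 0 ≤ PowerSeries.coeff (R := ℝ) 2 (f i)) :
    ∀ n : ℕ, 0 < (-1 : ℝ) ^ n * PowerSeries.coeff (R := ℝ) n (∏ i, f i) := by
  obtain ⟨k, rfl⟩ := Nat.exists_eq_add_of_le' hm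
  set g : Fin (k + 2) → ℝ⟦X⟧ := fun i => rescale (-1) (f i)
  have hg_pos : ∀ i n, n ≠ 2 → 0 < coeff n (g i) := by
    simpa only [g, coeff_rescale] using h
  have hg_nonneg : ∀ i n, 0 ≤ coeff n (g i) := fun i n => by
    rcases eq_or_ne n 2 with rfl | hn
    · simpa [g, coeff_rescale] using h2 i
    · exact (hg_pos i n hn).le
  suffices hprod : ∀ n, 0 < coeff n (∏ i, g i) by
    simpa only [g, ← map_prod, coeff_rescale] using hprod
  rw [Fin.prod_univ_succ, Fin.prod_univ_succ, ← mul_assoc]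
  refine coeff_mul_pos_of_constantCoeff_pos ?_ (coeff_prod_nonneg _ fun i _ => hg_nonneg _)
    (constantCoeff_prod_pos _ fun i _ => ?_)
  · exact coeff_mul_pos_of_coeff_pos_of_ne_two (hg_nonneg 0) (hg_nonneg 1) (hg_pos 0) (hg_pos 1)
  · simpa only [coeff_zero_eq_constantCoeff_apply] using hg_pos i.succ.succ 0 two_ne_zero.symm
end
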